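/- Let S be a positive definite d×d complex matrix, let M be a Hermitian d×d matrix with 0 ≤ M ≤ I, and let v ∈ ℂ^d be a unit vector. Then ⟨v, M v⟩ ≤ √(Tr(S M)) · ⟨v, S^{−1/2} v⟩. -/

import Mathlib

/-!
Put `Q = S^{1/4}` and `w = Q⁻¹ v`. Then `⟨v, M v⟩ = Tr((QMQ)(w w*))`, and Cauchy–Schwarz for the
trace inner product bounds this by `‖QMQ‖₂ ‖w‖²`, where `‖w‖² = ⟨v, S^{-1/2} v⟩`. Finally
`‖QMQ‖₂² = Tr(M S^{1/2} M S^{1/2}) ≤ Tr(M S)`, since `M ≤ 1` gives `S^{1/2} M S^{1/2} ≤ S` and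
`Tr(M ·)` is monotone for `M ≥ 0`.
-/

open Matrix ComplexOrder
noncomputable def Matrix.PosSemidef.sqrt {n : Type*} {𝕜 : Type*} [Fintype n] [RCLike 𝕜]
    [DecidableEq n] {A : Matrix n n 𝕜} (hA : A.PosSemidef) : Matrix n n 𝕜 :=
  hA.1.eigenvectorUnitary.1 * diagonal ((↑) ∘ (√·) ∘ hA.1.eigenvalues) *
  (star hA.1.eigenvectorUnitary : Matrix n n 𝕜)

open scoped MatrixOrder

namespace Matrix

variable {𝕜 n : Type*} [RCLike 𝕜] [Fintype n]

theorem PosSemidef.sqrt_eq_cfcSqrt [DecidableEq n] {A : Matrix n n 𝕜} (hA : A.PosSemidef) :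
    hA.sqrt = CFC.sqrt A := by
  rw [CFC.sqrt_eq_cfc, cfc_nnreal_eq_real _ A hA.nonneg, hA.1.cfc_eq]
  simp [IsHermitian.cfc, PosSemidef.sqrt, Function.comp_def, hA.eigenvalues_nonneg]

theorem PosSemidef.trace_mul_nonneg {A B : Matrix n n 𝕜} (hA : A.PosSemidef)
    (hB : B.PosSemidef) : 0 ≤ (A * B).trace := by
  classical
  obtain ⟨C, rfl⟩ := CStarAlgebra.nonneg_iff_eq_star_mul_self.mp hA.nonneg
  rw [star_eq_conjTranspose, Matrix.mul_assoc, trace_mul_comm, Matrix.mul_assoc]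
  simpa [Matrix.mul_assoc] using (hB.mul_mul_conjTranspose_same C).trace_nonneg

theorem star_mulVec_dotProduct_mulVec (A X : Matrix n n 𝕜) (w : n → 𝕜) :
    star (A *ᵥ w) ⬝ᵥ X *ᵥ A *ᵥ w = star w ⬝ᵥ (Aᴴ * X * A) *ᵥ w := by
  rw [star_mulVec, ← dotProduct_mulVec, mulVec_mulVec, mulVec_mulVec, Matrix.mul_assoc]

theorem re_trace_mul_conjTranspose_le (A B : Matrix n n 𝕜) :
    RCLike.re (A * Bᴴ).trace ≤
      √(RCLike.re (A * Aᴴ).trace) * √(RCLike.re (B * Bᴴ).trace) := by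
  classical
  let _ := toMatrixSeminormedAddCommGroup (1 : Matrix n n 𝕜) PosSemidef.one
  let _ := toMatrixInnerProductSpace (1 : Matrix n n 𝕜) PosSemidef.one
  have h := re_inner_le_norm (𝕜 := 𝕜) B A
  rw [norm_eq_sqrt_re_inner (𝕜 := 𝕜), norm_eq_sqrt_re_inner (𝕜 := 𝕜)] at h
  change RCLike.re (A * 1 * Bᴴ).trace ≤
      √(RCLike.re (B * 1 * Bᴴ).trace) * √(RCLike.re (A * 1 * Aᴴ).trace) at h
  simpa only [Matrix.mul_one, mul_comm] using h

theorem re_star_dotProduct_mulVec_le (A : Matrix n n 𝕜) (w : n → 𝕜) :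
    RCLike.re (star w ⬝ᵥ A *ᵥ w) ≤
      √(RCLike.re (A * Aᴴ).trace) * RCLike.re (star w ⬝ᵥ w) := by
  obtain ⟨r, hr, hwr⟩ := RCLike.nonneg_iff_exists_ofReal.mp (dotProduct_star_self_nonneg w)
  have hB : (vecMulVec w (star w))ᴴ = vecMulVec w (star w) := by
    rw [conjTranspose_vecMulVec, star_star]
  have hAB : (A * (vecMulVec w (star w))ᴴ).trace = star w ⬝ᵥ A *ᵥ w := by
    rw [hB, mul_vecMulVec, trace_vecMulVec, dotProduct_comm]
  have hBB : (vecMulVec w (star w) * (vecMulVec w (star w))ᴴ).trace = (r : 𝕜) ^ 2 := by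
    rw [hB, vecMulVec_mul_vecMulVec, trace_vecMulVec, dotProduct_smul, smul_eq_mul,
      dotProduct_comm w, ← hwr, sq]
  have := re_trace_mul_conjTranspose_le A (vecMulVec w (star w))
  rwa [hAB, hBB, ← RCLike.ofReal_pow, RCLike.ofReal_re, Real.sqrt_sq hr,
    ← RCLike.ofReal_re (K := 𝕜) r, hwr] at this

theorem PosSemidef.trace_mul_mul_mul_le [DecidableEq n] {M R : Matrix n n 𝕜}
    (hM : M.PosSemidef) (hM1 : (1 - M).PosSemidef) (hR : R.IsHermitian) :
    (M * R * M * R).trace ≤ (M * (R * R)).trace := by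
  have hRMR : (R * (1 - M) * R).PosSemidef := by
    simpa only [hR.eq] using hM1.conjTranspose_mul_mul_same R
  have := hM.trace_mul_nonneg hRMR
  rw [mul_sub, mul_one, sub_mul, Matrix.mul_sub, trace_sub, sub_nonneg] at this
  simpa only [Matrix.mul_assoc] using this

theorem IsHermitian.trace_conj_mul_conjTranspose {Q M : Matrix n n 𝕜} (hQ : Q.IsHermitian)
    (hM : M.IsHermitian) :
    ((Q * M * Q) * (Q * M * Q)ᴴ).trace = (M * (Q * Q) * M * (Q * Q)).trace := by
  rw [conjTranspose_mul, conjTranspose_mul, hQ.eq, hM.eq]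
  simp only [Matrix.mul_assoc]
  rw [trace_mul_comm Q]
  simp only [Matrix.mul_assoc]

end Matrix

theorem barnum_knill_step_general {d : ℕ} (S M : Matrix (Fin d) (Fin d) ℂ) (hS : S.PosDef)
    (hM : M.PosSemidef) (hM1 : ((1 : Matrix (Fin d) (Fin d) ℂ) - M).PosSemidef)
    (v : Fin d → ℂ) :
    (star v ⬝ᵥ (M *ᵥ v)).re ≤
      Real.sqrt ((Matrix.trace (S * M)).re) * (star v ⬝ᵥ ((hS.posSemidef.sqrt)⁻¹ *ᵥ v)).re := by
  rw [hS.posSemidef.sqrt_eq_cfcSqrt]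
  set R := CFC.sqrt S
  set Q := CFC.sqrt R
  have hQ : IsStrictlyPositive Q := (hS.isStrictlyPositive.sqrt).sqrt
  have hQQ : Q * Q = R := CFC.sqrt_mul_sqrt_self R
  have hRR : R * R = S := CFC.sqrt_mul_sqrt_self S
  have hRh : R.IsHermitian := (CFC.sqrt_nonneg S).posSemidef.isHermitian
  have hQh : Q.IsHermitian := hQ.nonneg.posSemidef.isHermitian
  set w := Q⁻¹ *ᵥ v
  have hvw : v = Q *ᵥ w := by
    rw [mulVec_mulVec, mul_nonsing_inv _ ((isUnit_iff_isUnit_det Q).mp hQ.isUnit), one_mulVec]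
  have hlhs : star v ⬝ᵥ M *ᵥ v = star w ⬝ᵥ (Q * M * Q) *ᵥ w := by
    rw [hvw, star_mulVec_dotProduct_mulVec, hQh.eq]
  have hrhs : star v ⬝ᵥ R⁻¹ *ᵥ v = star w ⬝ᵥ w := by
    have hQinv : Q⁻¹ᴴ = Q⁻¹ := by rw [conjTranspose_nonsing_inv, hQh.eq]
    have h := star_mulVec_dotProduct_mulVec Q⁻¹ 1 v
    rw [one_mulVec, Matrix.mul_one, hQinv, ← Matrix.mul_inv_rev, hQQ] at h
    exact h.symm
  have htrace : ((Q * M * Q) * (Q * M * Q)ᴴ).trace.re ≤ (S * M).trace.re := by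
    rw [hQh.trace_conj_mul_conjTranspose hM.isHermitian, hQQ, trace_mul_comm S, ← hRR]
    exact (RCLike.le_iff_re_im.mp (hM.trace_mul_mul_mul_le hM1 hRh)).1
  calc (star v ⬝ᵥ M *ᵥ v).re = (star w ⬝ᵥ (Q * M * Q) *ᵥ w).re := by rw [hlhs]
    _ ≤ √((Q * M * Q) * (Q * M * Q)ᴴ).trace.re * (star w ⬝ᵥ w).re :=
        re_star_dotProduct_mulVec_le _ w
    _ ≤ √(S * M).trace.re * (star v ⬝ᵥ R⁻¹ *ᵥ v).re := by
        rw [hrhs]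
        gcongr
        exact (RCLike.nonneg_iff.mp (dotProduct_star_self_nonneg w)).1

/-- Barnum–Knill-style step: for `S` positive definite, `M` Hermitian with `0 ≤ M ≤ I`,
and a unit vector `v`, one has `⟨v, M v⟩ ≤ √(Tr(S M)) · ⟨v, S^{−1/2} v⟩`. -/
theorem barnum_knill_step {d : ℕ} (S M : Matrix (Fin d) (Fin d) ℂ) (hS : S.PosDef)
    (hM : M.PosSemidef) (hM1 : ((1 : Matrix (Fin d) (Fin d) ℂ) - M).PosSemidef)
    (v : Fin d → ℂ) (hv : star v ⬝ᵥ v = 1) :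
    (star v ⬝ᵥ (M *ᵥ v)).re ≤
      Real.sqrt ((Matrix.trace (S * M)).re) * (star v ⬝ᵥ ((hS.posSemidef.sqrt)⁻¹ *ᵥ v)).re :=
  barnum_knill_step_general S M hS hM hM1 v
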